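/- (Charikar's greedy peeling algorithm is a 2-approximation for the Densest Subgraph Problem.) Let V = S_n ⊋ S_{n−1} ⊋ ⋯ ⊋ S_1 be a chain of subsets with |S_i| = i for each i, such that for every i ≥ 2 there is a vertex v_i ∈ S_i of minimum degree in G[S_i] (deg_{S_i}(v_i) ≤ deg_{S_i}(u) for all u ∈ S_i) with S_{i−1} = S_i ∖ {v_i}. Then max_{1 ≤ i ≤ n} d(S_i) ≥ (1/2)·max{d(S) : S ⊆ V, S ≠ ∅}. -/

import Mathlib

open scoped Classical

variable {V : Type*} [Fintype V]

/-- `e[S]`: the number of edges of `G` with both endpoints in `S`. -/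
noncomputable def edgeCount (G : SimpleGraph V) (S : Finset V) : ℕ :=
  (G.edgeFinset.filter (fun e => ∀ v ∈ e, v ∈ S)).card

/-- `d(S) = e[S] / |S|`: the degree density of `S`. -/
noncomputable def density (G : SimpleGraph V) (S : Finset V) : ℝ :=
  (edgeCount G S : ℝ) / (S.card : ℝ)

/-- `deg_S(v)`: the degree of `v` in the subgraph induced by `S`. -/
noncomputable def degIn (G : SimpleGraph V) (S : Finset V) (v : V) : ℕ :=
  (S.filter (fun u => G.Adj v u)).card

lemma edgeCount_erase (G : SimpleGraph V) (S : Finset V) (v : V) (hv : v ∈ S) :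
    edgeCount G S = edgeCount G (S.erase v) + degIn G S v := by
  classical
  unfold edgeCount degIn
  rw [← Finset.card_filter_add_card_filter_not
    (s := G.edgeFinset.filter (fun e => ∀ u ∈ e, u ∈ S)) (p := fun e => v ∉ e)]
  congr 1
  · rw [Finset.filter_filter]
    congr 1
    apply Finset.filter_congr
    intro e _
    simp only [Finset.mem_erase]
    constructor
    · rintro h u hu
      exact ⟨fun hvu => h.2 (hvu ▸ hu), h.1 u hu⟩
    · intro h
      exact ⟨fun u hu => (h u hu).2, fun hv' => (h v hv').1 rfl⟩
  · refine (Finset.card_bij (fun u _ => s(v, u)) ?_ ?_ ?_).symm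
    · intro u hu
      simp only [Finset.mem_filter] at hu ⊢
      refine ⟨⟨?_, ?_⟩, ?_⟩
      · rw [SimpleGraph.mem_edgeFinset, SimpleGraph.mem_edgeSet]; exact hu.2
      · intro w hw
        rcases Sym2.mem_iff.mp hw with h | h
        · exact h ▸ hv
        · exact h ▸ hu.1
      · simp
    · intro u₁ _ u₂ _ h
      exact Sym2.congr_right.mp h
    · intro e he
      simp only [Finset.mem_filter, not_not] at he
      obtain ⟨⟨hef, hall⟩, hve⟩ := he
      refine ⟨Sym2.Mem.other hve, ?_, Sym2.other_spec hve⟩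
      simp only [Finset.mem_filter]
      refine ⟨hall _ (Sym2.other_mem hve), ?_⟩
      rw [SimpleGraph.mem_edgeFinset, ← Sym2.other_spec hve, SimpleGraph.mem_edgeSet] at hef
      exact hef

lemma edgeCount_empty (G : SimpleGraph V) : edgeCount G (∅ : Finset V) = 0 := by
  unfold edgeCount
  rw [Finset.card_eq_zero, Finset.filter_eq_empty_iff]
  intro e he
  induction e using Sym2.ind with
  | _ a b =>
    intro h
    simpa using h a (Sym2.mem_mk_left a b)

lemma sum_degIn (G : SimpleGraph V) (S : Finset V) :
    ∑ v ∈ S, degIn G S v = 2 * edgeCount G S := by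
  classical
  induction S using Finset.induction_on with
  | empty => simp [edgeCount_empty]
  | @insert a s ha ih =>
    have hdega : degIn G (insert a s) a = degIn G s a := by
      unfold degIn
      rw [Finset.filter_insert, if_neg (G.loopless.irrefl a)]
    have hstep : ∀ v ∈ s, degIn G (insert a s) v
        = degIn G s v + (if G.Adj v a then 1 else 0) := by
      intro v hv
      unfold degIn
      rw [Finset.filter_insert]
      split
      · rw [Finset.card_insert_of_notMem (fun h => ha (Finset.mem_filter.mp h).1)]
      · simp
    have hec : edgeCount G (insert a s) = edgeCount G s + degIn G (insert a s) a := by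
      have := edgeCount_erase G (insert a s) a (Finset.mem_insert_self a s)
      rwa [Finset.erase_insert ha] at this
    have hsum2 : ∑ v ∈ s, (if G.Adj v a then 1 else 0) = degIn G s a := by
      rw [Finset.sum_boole]
      unfold degIn
      norm_cast
      congr 1
      ext u
      simp [G.adj_comm]
    rw [Finset.sum_insert ha, hdega, Finset.sum_congr rfl hstep, Finset.sum_add_distrib,
      hsum2, ih, hec, hdega]
    ring

lemma degIn_mono (G : SimpleGraph V) {S T : Finset V} (h : S ⊆ T) (v : V) :
    degIn G S v ≤ degIn G T v :=
  Finset.card_le_card (Finset.filter_subset_filter _ h)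

lemma density_nonneg (G : SimpleGraph V) (S : Finset V) : 0 ≤ density G S :=
  div_nonneg (Nat.cast_nonneg _) (Nat.cast_nonneg _)

lemma removal (G : SimpleGraph V) {T : Finset V}
    (hmax : ∀ A : Finset V, A.Nonempty → density G A ≤ density G T)
    {v : V} (hv : v ∈ T) :
    (edgeCount G T : ℝ) ≤ (T.card : ℝ) * (degIn G T v : ℝ) := by
  have hk1 : 1 ≤ T.card := Finset.card_pos.mpr ⟨v, hv⟩
  rcases eq_or_lt_of_le hk1 with h1 | h2
  · -- card = 1, so T = {v} and edgeCount = 0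
    obtain ⟨a, ha⟩ := Finset.card_eq_one.mp h1.symm
    have hTv : T = {v} := by
      rw [ha] at hv ⊢
      rw [Finset.mem_singleton] at hv
      rw [hv]
    have hzero : edgeCount G T = 0 := by
      unfold edgeCount
      rw [Finset.card_eq_zero, Finset.filter_eq_empty_iff]
      intro e he
      induction e using Sym2.ind with
      | _ a b =>
        intro h
        have h1 := h a (Sym2.mem_mk_left a b)
        have h2 := h b (Sym2.mem_mk_right a b)
        rw [hTv, Finset.mem_singleton] at h1 h2
        rw [SimpleGraph.mem_edgeFinset, SimpleGraph.mem_edgeSet] at he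
        subst h1; subst h2
        exact G.loopless.irrefl _ he
    rw [hzero]
    push_cast
    positivity
  · -- card ≥ 2
    have hne' : (T.erase v).Nonempty := by
      rw [← Finset.card_pos, Finset.card_erase_of_mem hv]
      omega
    have hle := hmax _ hne'
    unfold density at hle
    rw [Finset.card_erase_of_mem hv] at hle
    have hec := edgeCount_erase G T v hv
    have hcast : ((T.card - 1 : ℕ) : ℝ) = (T.card : ℝ) - 1 := by
      rw [Nat.cast_sub hk1]; norm_num
    rw [hcast] at hle
    have hk2 : (2 : ℝ) ≤ (T.card : ℝ) := by exact_mod_cast h2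
    have h0 : (0 : ℝ) < (T.card : ℝ) - 1 := by linarith
    have h0' : (0 : ℝ) < (T.card : ℝ) := by linarith
    rw [div_le_div_iff₀ h0 h0'] at hle
    have hecR : (edgeCount G T : ℝ) = (edgeCount G (T.erase v) : ℝ) + (degIn G T v : ℝ) := by
      exact_mod_cast hec
    nlinarith [hecR, hle]

/-- Charikar's greedy peeling algorithm is a 2-approximation for DSP: along the peeling
chain `V = S_n ⊋ ⋯ ⊋ S_1`, with `S_{i−1}` obtained by removing a minimum-degree vertex
of `G[S_i]`, the best density among `S_1, …, S_n` is at least half the maximum density. -/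
theorem greedy_peeling_two_approx (G : SimpleGraph V) (hn : 1 ≤ Fintype.card V)
    (S : ℕ → Finset V)
    (htop : S (Fintype.card V) = Finset.univ)
    (hcard : ∀ i ∈ Finset.Icc 1 (Fintype.card V), (S i).card = i)
    (hstep : ∀ i ∈ Finset.Icc 2 (Fintype.card V),
      ∃ v ∈ S i, (∀ u ∈ S i, degIn G (S i) v ≤ degIn G (S i) u) ∧
        S (i - 1) = (S i).erase v) :
    ∀ T : Finset V, T.Nonempty →
      (1 / 2) * density G T ≤
        (Finset.Icc 1 (Fintype.card V)).sup' (Finset.nonempty_Icc.mpr hn)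
          (fun i => density G (S i)) := by
  intro T hT
  set n := Fintype.card V with hn'
  -- pick a maximum-density nonempty set T*
  obtain ⟨M, hMmem, hMmax⟩ := Finset.exists_max_image
    ((Finset.univ : Finset (Finset V)).filter (fun A => A.Nonempty)) (density G)
    ⟨T, Finset.mem_filter.mpr ⟨Finset.mem_univ T, hT⟩⟩
  have hMne : M.Nonempty := (Finset.mem_filter.mp hMmem).2
  have hmax : ∀ A : Finset V, A.Nonempty → density G A ≤ density G M := by
    intro A hA
    exact hMmax A (Finset.mem_filter.mpr ⟨Finset.mem_univ A, hA⟩)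
  have key : ∀ i, i ∈ Finset.Icc 1 n → M ⊆ S i →
      ∃ j ∈ Finset.Icc 1 n, density G M ≤ 2 * density G (S j) := by
    intro i
    induction i using Nat.strong_induction_on with
    | _ i ih =>
      intro hi hsub
      rw [Finset.mem_Icc] at hi
      rcases eq_or_lt_of_le hi.1 with h1 | h2
      · -- i = 1
        have hMeq : M = S i := by
          apply Finset.eq_of_subset_of_card_le hsub
          rw [hcard i (Finset.mem_Icc.mpr hi), ← h1]
          exact Finset.card_pos.mpr hMne
        refine ⟨i, Finset.mem_Icc.mpr hi, ?_⟩
        rw [← hMeq]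
        have := density_nonneg G M
        linarith
      · -- i ≥ 2
        obtain ⟨v, hvS, hmin, herase⟩ := hstep i (Finset.mem_Icc.mpr ⟨h2, hi.2⟩)
        by_cases hvT : v ∈ M
        · refine ⟨i, Finset.mem_Icc.mpr hi, ?_⟩
          have h1 : (edgeCount G M : ℝ) ≤ (M.card : ℝ) * (degIn G M v : ℝ) :=
            removal G hmax hvT
          have h2' : degIn G M v ≤ degIn G (S i) v := degIn_mono G hsub v
          have h3 : (S i).card * degIn G (S i) v ≤ 2 * edgeCount G (S i) := by
            calc (S i).card * degIn G (S i) v ≤ ∑ u ∈ S i, degIn G (S i) u := by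
                  simpa [smul_eq_mul] using
                    Finset.card_nsmul_le_sum (S i) (degIn G (S i)) (degIn G (S i) v) hmin
              _ = 2 * edgeCount G (S i) := sum_degIn G (S i)
          have hMpos : (0 : ℝ) < (M.card : ℝ) := by
            exact_mod_cast Finset.card_pos.mpr hMne
          have hSipos : (0 : ℝ) < ((S i).card : ℝ) := by
            have : 0 < (S i).card := by
              rw [hcard i (Finset.mem_Icc.mpr hi)]; omega
            exact_mod_cast this
          have hA : density G M ≤ (degIn G M v : ℝ) := by
            rw [density, div_le_iff₀ hMpos]
            linarith [h1]
          have hB : (degIn G (S i) v : ℝ) ≤ 2 * density G (S i) := by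
            rw [density]
            rw [← mul_div_assoc, le_div_iff₀ hSipos]
            have h3' : ((S i).card : ℝ) * (degIn G (S i) v : ℝ)
                ≤ 2 * (edgeCount G (S i) : ℝ) := by exact_mod_cast h3
            linarith
          have h2'' : (degIn G M v : ℝ) ≤ (degIn G (S i) v : ℝ) := by exact_mod_cast h2'
          linarith
        · apply ih (i - 1) (by omega) (Finset.mem_Icc.mpr ⟨by omega, by omega⟩)
          rw [herase]
          exact Finset.subset_erase.mpr ⟨hsub, hvT⟩
  obtain ⟨j, hj, hineq⟩ := key n (Finset.mem_Icc.mpr ⟨hn, le_refl n⟩)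
    (by rw [htop]; exact Finset.subset_univ M)
  have hTM : density G T ≤ density G M := hmax T hT
  have hsup : density G (S j) ≤ (Finset.Icc 1 n).sup' (Finset.nonempty_Icc.mpr hn)
      (fun i => density G (S i)) := Finset.le_sup' (fun i => density G (S i)) hj
  linarith
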